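/- Let A, B > 0 with B > A, μ ∈ ℝ, and let J = diag(−1,−1,1). For (M,q) ∈ ℝ³ × ℝ³ with q₃² − q₁² − q₂² > 0 set ‖q‖ = √(q₃² − q₁² − q₂²), R(q) = −A q₂² − B q₁² + (A+B) q₃² − 2√(AB)‖q‖ q₃, ⟨M,q⟩ = −M₁q₁ − M₂q₂ + M₃q₃, and define H(M,q) = ½(M₁² + M₂² − M₃²) + μ‖q‖/√(R(q)) and F(M,q) = A M₁² + B M₂² − (2√(AB)/‖q‖)⟨M,q⟩ M₃ + 2μ√(AB) q₃/√(R(q)). Then at every point (M,q) with q₃² − q₁² − q₂² > 0 and R(q) > 0, the Lie–Poisson bracket of so(2,1)* satisfies {H,F}(M,q) = 0. -/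

import Mathlib

open scoped Matrix

/-- Gradient with respect to the `M` variables of a function on `ℝ³ × ℝ³`. -/
noncomputable def gradM (f : (Fin 3 → ℝ) × (Fin 3 → ℝ) → ℝ)
    (x : (Fin 3 → ℝ) × (Fin 3 → ℝ)) : Fin 3 → ℝ :=
  fun i => fderiv ℝ f x (Pi.single i 1, 0)

/-- Gradient with respect to the `q` variables of a function on `ℝ³ × ℝ³`. -/
noncomputable def gradQ (f : (Fin 3 → ℝ) × (Fin 3 → ℝ) → ℝ)
    (x : (Fin 3 → ℝ) × (Fin 3 → ℝ)) : Fin 3 → ℝ :=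
  fun i => fderiv ℝ f x (0, Pi.single i 1)

/-- The matrix `J = diag(−1,−1,1)` acting on vectors in `ℝ³`. -/
def Jmat (v : Fin 3 → ℝ) : Fin 3 → ℝ := ![-v 0, -v 1, v 2]

/-- The Lie–Poisson bracket of `so(2,1)*`:
`{f,g}(M,q) = (JM)·(∇_M f × ∇_M g) + (Jq)·(∇_M f × ∇_q g + ∇_q f × ∇_M g)`. -/
noncomputable def liePoissonSO21 (f g : (Fin 3 → ℝ) × (Fin 3 → ℝ) → ℝ)
    (x : (Fin 3 → ℝ) × (Fin 3 → ℝ)) : ℝ :=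
  Jmat x.1 ⬝ᵥ (gradM f x ⨯₃ gradM g x) +
    Jmat x.2 ⬝ᵥ (gradM f x ⨯₃ gradQ g x + gradQ f x ⨯₃ gradM g x)

/-- The pseudo-Euclidean norm `‖q‖ = √(q₃² − q₁² − q₂²)`. -/
noncomputable def pnorm (q : Fin 3 → ℝ) : ℝ :=
  Real.sqrt (q 2 ^ 2 - q 0 ^ 2 - q 1 ^ 2)

/-- `R(q) = −A q₂² − B q₁² + (A+B) q₃² − 2√(AB)‖q‖ q₃`. -/
noncomputable def Rhyp (A B : ℝ) (q : Fin 3 → ℝ) : ℝ :=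
  -A * q 1 ^ 2 - B * q 0 ^ 2 + (A + B) * q 2 ^ 2 -
    2 * Real.sqrt (A * B) * pnorm q * q 2

/-- The pseudo-Euclidean pairing `⟨M,q⟩ = −M₁q₁ − M₂q₂ + M₃q₃`. -/
def ppair (M q : Fin 3 → ℝ) : ℝ := -(M 0 * q 0) - M 1 * q 1 + M 2 * q 2

/-- The Hamiltonian `H = ½(M₁² + M₂² − M₃²) + μ‖q‖/√R(q)` of the hyperbolic
version of the new two-centre system. -/
noncomputable def Hhyp (A B μ : ℝ) (x : (Fin 3 → ℝ) × (Fin 3 → ℝ)) : ℝ :=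
  (1 / 2) * (x.1 0 ^ 2 + x.1 1 ^ 2 - x.1 2 ^ 2) +
    μ * pnorm x.2 / Real.sqrt (Rhyp A B x.2)

/-- The integral `F = A M₁² + B M₂² − (2√(AB)/‖q‖)⟨M,q⟩M₃ + 2μ√(AB) q₃/√R(q)`. -/
noncomputable def Fhyp (A B μ : ℝ) (x : (Fin 3 → ℝ) × (Fin 3 → ℝ)) : ℝ :=
  A * x.1 0 ^ 2 + B * x.1 1 ^ 2 -
    (2 * Real.sqrt (A * B) / pnorm x.2) * ppair x.1 x.2 * x.1 2 +
    2 * μ * Real.sqrt (A * B) * x.2 2 / Real.sqrt (Rhyp A B x.2)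

set_option maxHeartbeats 4000000

/-- For `B > A > 0` the Lie–Poisson bracket of `so(2,1)*` of `H` and `F`
vanishes at every point with `q₃² − q₁² − q₂² > 0` and `R(q) > 0`. -/
theorem liePoisson_hyperbolic_H_F_eq_zero (A B μ : ℝ) (hA : A > 0) (hBA : B > A)
    (x : (Fin 3 → ℝ) × (Fin 3 → ℝ))
    (hq : x.2 2 ^ 2 - x.2 0 ^ 2 - x.2 1 ^ 2 > 0) (hR : Rhyp A B x.2 > 0) :
    liePoissonSO21 (Hhyp A B μ) (Fhyp A B μ) x = 0 := by
  have hnpos : (0:ℝ) < Real.sqrt (x.2 2 ^ 2 - x.2 0 ^ 2 - x.2 1 ^ 2) := Real.sqrt_pos.mpr hq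
  have hrpos : (0:ℝ) < Real.sqrt (Rhyp A B x.2) := Real.sqrt_pos.mpr hR
  have hnne := hnpos.ne'
  have hrne := hrpos.ne'
  have hM : ∀ i, HasFDerivAt (fun y : (Fin 3 → ℝ) × (Fin 3 → ℝ) => y.1 i)
      ((ContinuousLinearMap.proj i).comp (ContinuousLinearMap.fst ℝ (Fin 3 → ℝ) (Fin 3 → ℝ))) x := by
    intro i
    exact ((ContinuousLinearMap.proj i).comp (ContinuousLinearMap.fst ℝ (Fin 3 → ℝ) (Fin 3 → ℝ))).hasFDerivAt
  have hQ : ∀ i, HasFDerivAt (fun y : (Fin 3 → ℝ) × (Fin 3 → ℝ) => y.2 i)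
      ((ContinuousLinearMap.proj i).comp (ContinuousLinearMap.snd ℝ (Fin 3 → ℝ) (Fin 3 → ℝ))) x := by
    intro i
    exact ((ContinuousLinearMap.proj i).comp (ContinuousLinearMap.snd ℝ (Fin 3 → ℝ) (Fin 3 → ℝ))).hasFDerivAt
  have hM2 : ∀ i, HasFDerivAt (fun y : (Fin 3 → ℝ) × (Fin 3 → ℝ) => y.1 i ^ 2)
      ((2 * x.1 i) • ((ContinuousLinearMap.proj i).comp (ContinuousLinearMap.fst ℝ (Fin 3 → ℝ) (Fin 3 → ℝ)))) x := by
    intro i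
    have := (hasDerivAt_pow 2 (x.1 i)).comp_hasFDerivAt x (hM i)
    simpa [Function.comp_def] using this
  have hQ2 : ∀ i, HasFDerivAt (fun y : (Fin 3 → ℝ) × (Fin 3 → ℝ) => y.2 i ^ 2)
      ((2 * x.2 i) • ((ContinuousLinearMap.proj i).comp (ContinuousLinearMap.snd ℝ (Fin 3 → ℝ) (Fin 3 → ℝ)))) x := by
    intro i
    have := (hasDerivAt_pow 2 (x.2 i)).comp_hasFDerivAt x (hQ i)
    simpa [Function.comp_def] using this
  have hs := ((hQ2 2).sub (hQ2 0)).sub (hQ2 1)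
  have hN := hs.sqrt (ne_of_gt hq)
  have hNp : HasFDerivAt (fun y : (Fin 3 → ℝ) × (Fin 3 → ℝ) => pnorm y.2) _ x := hN
  have hRd := ((((hQ2 1).const_mul (-A)).sub ((hQ2 0).const_mul B)).add
      ((hQ2 2).const_mul (A+B))).sub ((hNp.const_mul (2*Real.sqrt (A*B))).mul (hQ 2))
  have hRp : HasFDerivAt (fun y : (Fin 3 → ℝ) × (Fin 3 → ℝ) => Rhyp A B y.2) _ x := hRd
  have hrs := hRp.sqrt (ne_of_gt hR)
  have hinvR := (hasDerivAt_inv hrne).comp_hasFDerivAt x hrs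
  have hinvN := (hasDerivAt_inv hnne).comp_hasFDerivAt x hNp
  have hHd := ((((hM2 0).add (hM2 1)).sub (hM2 2)).const_mul (1/2)).add
      ((hNp.const_mul μ).mul hinvR)
  have hHp : HasFDerivAt (Hhyp A B μ) _ x := hHd
  have hPp : HasFDerivAt (fun y : (Fin 3 → ℝ) × (Fin 3 → ℝ) => ppair y.1 y.2) _ x :=
    (((((hM 0).mul (hQ 0)).neg).sub ((hM 1).mul (hQ 1))).add ((hM 2).mul (hQ 2)))
  have hFd := ((((hM2 0).const_mul A).add ((hM2 1).const_mul B)).sub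
      (((hinvN.const_mul (2*Real.sqrt (A*B))).mul hPp).mul (hM 2))).add
      (((hQ 2).const_mul (2*μ*Real.sqrt (A*B))).mul hinvR)
  have hFp : HasFDerivAt (Fhyp A B μ) _ x := hFd
  have hfH := hHp.fderiv
  have hfF := hFp.fderiv
  clear hs hN hRd hHd hFd hPp hinvR hinvN hrs hM hQ hM2 hQ2 hNp hRp hHp hFp
  set M0 := x.1 0 with hM0
  set M1 := x.1 1 with hM1
  set M2 := x.1 2 with hM2
  set q0 := x.2 0 with hq0
  set q1 := x.2 1 with hq1
  set q2 := x.2 2 with hq2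
  set c := Real.sqrt (A*B) with hc
  set n := Real.sqrt (q2 ^ 2 - q0 ^ 2 - q1 ^ 2) with hn
  set r := Real.sqrt (Rhyp A B x.2) with hr
  have efold1 : pnorm x.2 = n := rfl
  have efold2 : Real.sqrt (Rhyp A B x.2) = r := rfl
  have efold3 : Real.sqrt (A*B) = c := rfl
  have efold4 : Real.sqrt (x.2 2 ^ 2 - x.2 0 ^ 2 - x.2 1 ^ 2) = n := rfl
  have aH0 : gradM (Hhyp A B μ) x 0 = M0 := by
    simp [gradM, hfH, ContinuousLinearMap.add_apply, ContinuousLinearMap.sub_apply,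
      ContinuousLinearMap.smul_apply, ContinuousLinearMap.neg_apply, ContinuousLinearMap.comp_apply,
      ContinuousLinearMap.proj_apply, ContinuousLinearMap.coe_fst',
      ContinuousLinearMap.coe_snd', Pi.single_apply, smul_eq_mul, Function.comp, ppair, efold1, efold2, efold3]
  have aH1 : gradM (Hhyp A B μ) x 1 = M1 := by
    simp [gradM, hfH, ContinuousLinearMap.add_apply, ContinuousLinearMap.sub_apply,
      ContinuousLinearMap.smul_apply, ContinuousLinearMap.neg_apply, ContinuousLinearMap.comp_apply,
      ContinuousLinearMap.proj_apply, ContinuousLinearMap.coe_fst',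
      ContinuousLinearMap.coe_snd', Pi.single_apply, smul_eq_mul, Function.comp, ppair, efold1, efold2, efold3]
  have aH2 : gradM (Hhyp A B μ) x 2 = -M2 := by
    simp [gradM, hfH, ContinuousLinearMap.add_apply, ContinuousLinearMap.sub_apply,
      ContinuousLinearMap.smul_apply, ContinuousLinearMap.neg_apply, ContinuousLinearMap.comp_apply,
      ContinuousLinearMap.proj_apply, ContinuousLinearMap.coe_fst',
      ContinuousLinearMap.coe_snd', Pi.single_apply, smul_eq_mul, Function.comp, ppair, efold1, efold2, efold3]
  have cH0 : gradQ (Hhyp A B μ) x 0 = μ * (-(q0/n)/r - n * (-(2*B*q0) + 2*c*q2*q0/n)/(2*r^3)) := by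
    simp [gradQ, hfH, ContinuousLinearMap.add_apply, ContinuousLinearMap.sub_apply,
      ContinuousLinearMap.smul_apply, ContinuousLinearMap.neg_apply, ContinuousLinearMap.comp_apply,
      ContinuousLinearMap.proj_apply, ContinuousLinearMap.coe_fst',
      ContinuousLinearMap.coe_snd', Pi.single_apply, smul_eq_mul, Function.comp, ppair, efold1, efold2, efold3, efold4]
    field_simp
    ring
  have cH1 : gradQ (Hhyp A B μ) x 1 = μ * (-(q1/n)/r - n * (-(2*A*q1) + 2*c*q2*q1/n)/(2*r^3)) := by
    simp [gradQ, hfH, ContinuousLinearMap.add_apply, ContinuousLinearMap.sub_apply,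
      ContinuousLinearMap.smul_apply, ContinuousLinearMap.neg_apply, ContinuousLinearMap.comp_apply,
      ContinuousLinearMap.proj_apply, ContinuousLinearMap.coe_fst',
      ContinuousLinearMap.coe_snd', Pi.single_apply, smul_eq_mul, Function.comp, ppair, efold1, efold2, efold3, efold4]
    field_simp
    ring
  have cH2 : gradQ (Hhyp A B μ) x 2 = μ * (q2/n/r - n * (2*(A+B)*q2 - 2*c*n - 2*c*q2^2/n)/(2*r^3)) := by
    simp [gradQ, hfH, ContinuousLinearMap.add_apply, ContinuousLinearMap.sub_apply,
      ContinuousLinearMap.smul_apply, ContinuousLinearMap.neg_apply, ContinuousLinearMap.comp_apply,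
      ContinuousLinearMap.proj_apply, ContinuousLinearMap.coe_fst',
      ContinuousLinearMap.coe_snd', Pi.single_apply, smul_eq_mul, Function.comp, ppair, efold1, efold2, efold3, efold4]
    field_simp
    ring
  have bF0 : gradM (Fhyp A B μ) x 0 = 2*A*M0 + 2*c/n*q0*M2 := by
    simp [gradM, hfF, ContinuousLinearMap.add_apply, ContinuousLinearMap.sub_apply,
      ContinuousLinearMap.smul_apply, ContinuousLinearMap.neg_apply, ContinuousLinearMap.comp_apply,
      ContinuousLinearMap.proj_apply, ContinuousLinearMap.coe_fst',
      ContinuousLinearMap.coe_snd', Pi.single_apply, smul_eq_mul, Function.comp, ppair, efold1, efold2, efold3]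
    field_simp
  have bF1 : gradM (Fhyp A B μ) x 1 = 2*B*M1 + 2*c/n*q1*M2 := by
    simp [gradM, hfF, ContinuousLinearMap.add_apply, ContinuousLinearMap.sub_apply,
      ContinuousLinearMap.smul_apply, ContinuousLinearMap.neg_apply, ContinuousLinearMap.comp_apply,
      ContinuousLinearMap.proj_apply, ContinuousLinearMap.coe_fst',
      ContinuousLinearMap.coe_snd', Pi.single_apply, smul_eq_mul, Function.comp, ppair, efold1, efold2, efold3]
    field_simp
  have bF2 : gradM (Fhyp A B μ) x 2 = -(2*c/n)*(-(M0*q0) - M1*q1 + 2*M2*q2) := by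
    simp [gradM, hfF, ContinuousLinearMap.add_apply, ContinuousLinearMap.sub_apply,
      ContinuousLinearMap.smul_apply, ContinuousLinearMap.neg_apply, ContinuousLinearMap.comp_apply,
      ContinuousLinearMap.proj_apply, ContinuousLinearMap.coe_fst',
      ContinuousLinearMap.coe_snd', Pi.single_apply, smul_eq_mul, Function.comp, ppair, efold1, efold2, efold3]
    field_simp
    ring
  have dF0 : gradQ (Fhyp A B μ) x 0 = -(2*c*M2)*(-M0/n - (-(M0*q0) - M1*q1 + M2*q2)*(-(q0/n))/n^2)
      - 2*μ*c*q2*(-(2*B*q0) + 2*c*q2*q0/n)/(2*r^3) := by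
    simp [gradQ, hfF, ContinuousLinearMap.add_apply, ContinuousLinearMap.sub_apply,
      ContinuousLinearMap.smul_apply, ContinuousLinearMap.neg_apply, ContinuousLinearMap.comp_apply,
      ContinuousLinearMap.proj_apply, ContinuousLinearMap.coe_fst',
      ContinuousLinearMap.coe_snd', Pi.single_apply, smul_eq_mul, Function.comp, ppair, efold1, efold2, efold3, efold4]
    field_simp
    ring
  have dF1 : gradQ (Fhyp A B μ) x 1 = -(2*c*M2)*(-M1/n - (-(M0*q0) - M1*q1 + M2*q2)*(-(q1/n))/n^2)
      - 2*μ*c*q2*(-(2*A*q1) + 2*c*q2*q1/n)/(2*r^3) := by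
    simp [gradQ, hfF, ContinuousLinearMap.add_apply, ContinuousLinearMap.sub_apply,
      ContinuousLinearMap.smul_apply, ContinuousLinearMap.neg_apply, ContinuousLinearMap.comp_apply,
      ContinuousLinearMap.proj_apply, ContinuousLinearMap.coe_fst',
      ContinuousLinearMap.coe_snd', Pi.single_apply, smul_eq_mul, Function.comp, ppair, efold1, efold2, efold3, efold4]
    field_simp
    ring
  have dF2 : gradQ (Fhyp A B μ) x 2 = -(2*c*M2)*(M2/n - (-(M0*q0) - M1*q1 + M2*q2)*(q2/n)/n^2)
      + 2*μ*c*(1/r - q2*(2*(A+B)*q2 - 2*c*n - 2*c*q2^2/n)/(2*r^3)) := by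
    simp [gradQ, hfF, ContinuousLinearMap.add_apply, ContinuousLinearMap.sub_apply,
      ContinuousLinearMap.smul_apply, ContinuousLinearMap.neg_apply, ContinuousLinearMap.comp_apply,
      ContinuousLinearMap.proj_apply, ContinuousLinearMap.coe_fst',
      ContinuousLinearMap.coe_snd', Pi.single_apply, smul_eq_mul, Function.comp, ppair, efold1, efold2, efold3, efold4]
    field_simp
    ring
  have hn2 : n^2 = q2^2 - q0^2 - q1^2 := Real.sq_sqrt hq.le
  have hc2 : c^2 = A*B := Real.sq_sqrt (mul_nonneg hA.le (by linarith))
  have hr2 : r^2 = -A*q1^2 - B*q0^2 + (A+B)*q2^2 - 2*c*n*q2 := by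
    rw [hr, Real.sq_sqrt hR.le]
    simp only [Rhyp, efold1, efold3, ← hq0, ← hq1, ← hq2]
  simp only [liePoissonSO21, Jmat, cross_apply, Pi.add_apply, Matrix.cons_val_zero,
    Matrix.cons_val_one, Matrix.head_cons, Matrix.cons_val_two, Matrix.tail_cons,
    dotProduct, Fin.sum_univ_three, aH0, aH1, aH2, cH0, cH1, cH2,
    bF0, bF1, bF2, dF0, dF1, dF2, ← hM0, ← hM1, ← hM2, ← hq0, ← hq1, ← hq2]
  field_simp
  ring_nf
  linear_combination (2*μ*n^3) *
    ((B*c*q0*M1 - A*c*q1*M0) * hn2 + (c*M0*q1 - c*M1*q0) * hr2 + (q2*n*(M1*q0 - M0*q1)) * hc2)
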